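/- Let d ≥ 1 and let G_{n,d} be the graph on {1,...,n} with edges ab exactly when gcd(a,b) = d. The edge-coloring clique Ramsey threshold on G_{n,d} equals d · p_{R_cl(k_1,...,k_c)−1}. -/

import Mathlib

/-!
The non-isolated vertices of `G_{n,d}` are the multiples of `d`, and its cliques are `d` times
pairwise coprime sets. The set `{1, p₁, …, p_{R-1}}` is pairwise coprime, so scaling it by `d`
embeds the complete graph on `R` vertices into `G_{d p_{R-1}, d}`. Conversely, sending `d m` to
the rank of the least prime factor of `m` (and `d` to `1`) is injective on every clique, since
distinct coprime numbers have distinct least prime factors; for `n < d p_{R-1}` it lands in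
`{1, …, R-1}`. Colourings pull back along both maps, which gives the two bounds.
-/

section Arrows

variable {c : ℕ}

/-- The Ramsey arrow relation `N → (k₀, …, k_{c-1})` restricted to the graph `G` on `{1, …, N}`;
the classical one is `G = fun _ _ => True`. -/
def Arrows (G : ℕ → ℕ → Prop) (k : Fin c → ℕ) (N : ℕ) : Prop :=
  ∀ χ : Sym2 ℕ → Fin c, ∃ i : Fin c, ∃ S : Finset ℕ,
    ↑S ⊆ Set.Icc 1 N ∧ S.card = k i ∧ ∀ a ∈ S, ∀ b ∈ S, a ≠ b → G a b ∧ χ s(a, b) = i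

theorem arrows_top_iff {k : Fin c → ℕ} {N : ℕ} :
    Arrows (fun _ _ => True) k N ↔ ∀ χ : Sym2 ℕ → Fin c, ∃ i : Fin c, ∃ S : Finset ℕ,
      ↑S ⊆ Set.Icc 1 N ∧ S.card = k i ∧ ∀ a ∈ S, ∀ b ∈ S, a ≠ b → χ s(a, b) = i := by
  simp only [Arrows, true_and]

theorem Arrows.two_le {G : ℕ → ℕ → Prop} {k : Fin c → ℕ} {N : ℕ} (hc : 1 ≤ c)
    (hk : ∀ i, 2 ≤ k i) (h : Arrows G k N) : 2 ≤ N := by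
  obtain ⟨i, S, hsub, hcard, -⟩ := h fun _ => ⟨0, hc⟩
  have hS : S ⊆ Finset.Icc 1 N := fun x hx => Finset.mem_Icc.2 (hsub hx)
  have := Finset.card_le_card hS
  rw [hcard, Nat.card_Icc] at this
  have := hk i
  omega

/-- Colour a pair by the colour of its image under `f`. -/
theorem Arrows.of_map {G H : ℕ → ℕ → Prop} {k : Fin c → ℕ} {N M : ℕ} (f : ℕ → ℕ)
    (hf : Set.MapsTo f (Set.Icc 1 N) (Set.Icc 1 M))
    (hadj : ∀ a ∈ Set.Icc 1 N, ∀ b ∈ Set.Icc 1 N, a ≠ b → G a b → f a ≠ f b ∧ H (f a) (f b))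
    (h : Arrows G k N) : Arrows H k M := by
  intro χ
  obtain ⟨i, S, hsub, hcard, hmono⟩ := h fun e => χ (e.map f)
  have hinj : Set.InjOn f S := fun a ha b hb hab => by
    by_contra hne
    exact (hadj a (hsub ha) b (hsub hb) hne (hmono a ha b hb hne).1).1 hab
  refine ⟨i, S.image f, ?_, by rw [Finset.card_image_of_injOn hinj, hcard], ?_⟩
  · rw [Finset.coe_image]
    exact (hf.mono_left hsub).image_subset
  · simp only [Finset.mem_image]
    rintro _ ⟨a, ha, rfl⟩ _ ⟨b, hb, rfl⟩ hne
    have hab : a ≠ b := ne_of_apply_ne f hne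
    obtain ⟨hG, hχ⟩ := hmono a ha b hb hab
    exact ⟨(hadj a (hsub ha) b (hsub hb) hab hG).2, by rwa [Sym2.map_mk] at hχ⟩

end Arrows

section PrimeVertex

open Nat

/-- `1 ↦ 1` and `j ↦ p_{j-1}` for `j ≥ 2`; `Nat.nth Nat.Prime` is `0`-indexed (`nth Prime 0 = 2`),
hence the shift by `2`. -/
noncomputable def primeVertex (j : ℕ) : ℕ := if j ≤ 1 then 1 else nth Nat.Prime (j - 2)

/-- The index `j` with `primeVertex j = x.minFac`, and `1` for `x ≤ 1`. -/
noncomputable def minFacIndex (x : ℕ) : ℕ := if x ≤ 1 then 1 else count Nat.Prime x.minFac + 2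

theorem primeVertex_eq_one_iff {j : ℕ} : primeVertex j = 1 ↔ j ≤ 1 := by
  unfold primeVertex
  split_ifs with hj
  · simp [hj]
  · simp [hj, (prime_nth_prime _).ne_one]

theorem one_le_primeVertex (j : ℕ) : 1 ≤ primeVertex j := by
  unfold primeVertex
  split_ifs
  exacts [le_rfl, (prime_nth_prime _).one_lt.le]

theorem primeVertex_le_nth_prime {j R : ℕ} (hj : j ≤ R) :
    primeVertex j ≤ nth Nat.Prime (R - 2) := by
  unfold primeVertex
  split_ifs
  · exact (prime_nth_prime _).one_lt.le
  · exact (nth_le_nth infinite_setOfPred_prime).2 (by omega)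

theorem coprime_primeVertex {a b : ℕ} (hab : a ≠ b) :
    Coprime (primeVertex a) (primeVertex b) := by
  unfold primeVertex
  split_ifs with ha hb hb
  · exact coprime_one_left _
  · exact coprime_one_left _
  · exact coprime_one_right _
  · refine (coprime_primes (prime_nth_prime _) (prime_nth_prime _)).2 fun h => ?_
    have := nth_injective infinite_setOfPred_prime h
    omega

theorem primeVertex_injOn : Set.InjOn primeVertex (Set.Ici 1) := by
  intro a ha b hb hab
  by_contra hne
  have hcop := coprime_primeVertex hne
  rw [hab] at hcop
  have hone : primeVertex b = 1 := (coprime_self _).1 hcop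
  have ha1 : a ≤ 1 := primeVertex_eq_one_iff.1 (hab ▸ hone)
  have hb1 : b ≤ 1 := primeVertex_eq_one_iff.1 hone
  simp only [Set.mem_Ici] at ha hb
  omega

theorem one_le_minFacIndex (x : ℕ) : 1 ≤ minFacIndex x := by
  unfold minFacIndex
  split_ifs <;> omega

theorem minFacIndex_le {x m : ℕ} (hx : x < nth Nat.Prime m) : minFacIndex x ≤ m + 1 := by
  unfold minFacIndex
  split_ifs with h1
  · omega
  · have hp : x.minFac.Prime := minFac_prime (by omega)
    have hlt : nth Nat.Prime (count Nat.Prime x.minFac) < nth Nat.Prime m := by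
      rw [nth_count hp]
      exact (minFac_le (by omega)).trans_lt hx
    have := (nth_lt_nth infinite_setOfPred_prime).1 hlt
    omega

theorem minFacIndex_ne {x y : ℕ} (hx : 1 ≤ x) (hy : 1 ≤ y) (hxy : x ≠ y)
    (hcop : Coprime x y) : minFacIndex x ≠ minFacIndex y := by
  unfold minFacIndex
  split_ifs with h1 h2 h2
  · omega
  · omega
  · omega
  · intro he
    have hpx : x.minFac.Prime := minFac_prime (by omega)
    have hpy : y.minFac.Prime := minFac_prime (by omega)
    have hmin : x.minFac = y.minFac := by
      rw [← nth_count hpx, ← nth_count hpy]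
      congr 1
      omega
    have hdvd : x.minFac ∣ Nat.gcd x y := Nat.dvd_gcd (minFac_dvd x) (hmin ▸ minFac_dvd y)
    rw [hcop, Nat.dvd_one] at hdvd
    exact hpx.ne_one hdvd

end PrimeVertex

section GcdGraph

variable {c d : ℕ} {k : Fin c → ℕ}

theorem arrows_gcd_of_arrows_top {R : ℕ} (hd : 1 ≤ d) (h : Arrows (fun _ _ => True) k R) :
    Arrows (fun a b => Nat.gcd a b = d) k (d * Nat.nth Nat.Prime (R - 2)) := by
  refine h.of_map (fun j => d * primeVertex j) (fun j hj => ⟨?_, ?_⟩) ?_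
  · exact hd.trans (Nat.le_mul_of_pos_right d (one_le_primeVertex j))
  · exact Nat.mul_le_mul_left d (primeVertex_le_nth_prime hj.2)
  · intro a ha b hb hab _
    refine ⟨fun he => hab (primeVertex_injOn ha.1 hb.1 (Nat.eq_of_mul_eq_mul_left hd he)), ?_⟩
    rw [Nat.gcd_mul_left, coprime_primeVertex hab, mul_one]

theorem arrows_top_of_arrows_gcd {R n : ℕ} (hd : 1 ≤ d) (hR : 2 ≤ R)
    (hn : n < d * Nat.nth Nat.Prime (R - 2)) (h : Arrows (fun a b => Nat.gcd a b = d) k n) :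
    Arrows (fun _ _ => True) k (R - 1) := by
  refine h.of_map (fun x => minFacIndex (x / d)) (fun x hx => ⟨one_le_minFacIndex _, ?_⟩) ?_
  · have hlt : x / d < Nat.nth Nat.Prime (R - 2) := Nat.div_lt_of_lt_mul (hx.2.trans_lt hn)
    have := minFacIndex_le hlt
    show minFacIndex (x / d) ≤ R - 1
    omega
  · intro a ha b hb hab hg
    have hda : d ∣ a := hg ▸ Nat.gcd_dvd_left a b
    have hdb : d ∣ b := hg ▸ Nat.gcd_dvd_right a b
    have hcop : Nat.Coprime (a / d) (b / d) := hg ▸ Nat.coprime_div_gcd_div_gcd (by omega)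
    refine ⟨minFacIndex_ne ?_ ?_ (mt (Nat.div_left_inj hda hdb).1 hab) hcop, trivial⟩
    · exact (Nat.one_le_div_iff (by omega)).2 (Nat.le_of_dvd ha.1 hda)
    · exact (Nat.one_le_div_iff (by omega)).2 (Nat.le_of_dvd hb.1 hdb)

end GcdGraph

/-- Scaled gcd-`d` edge-clique variant: the least `n` such that every `c`-edge-coloring
of the graph on `{1,...,n}` with edges `gcd a b = d` forces a monochromatic
`k i`-clique in some color equals `d * p_{R_cl - 1}`. -/
theorem gcd_d_edge_ramsey_scaling (d : ℕ) (hd : 1 ≤ d) (c : ℕ) (hc : 1 ≤ c)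
    (k : Fin c → ℕ) (hk : ∀ i, 2 ≤ k i) (R : ℕ)
    (hR : IsLeast {N : ℕ | ∀ χ : Sym2 ℕ → Fin c, ∃ i : Fin c, ∃ S : Finset ℕ,
      ↑S ⊆ Set.Icc 1 N ∧ S.card = k i ∧
      ∀ a ∈ S, ∀ b ∈ S, a ≠ b → χ s(a, b) = i} R) :
    IsLeast {n : ℕ | ∀ χ : Sym2 ℕ → Fin c, ∃ i : Fin c, ∃ S : Finset ℕ,
      ↑S ⊆ Set.Icc 1 n ∧ S.card = k i ∧
      ∀ a ∈ S, ∀ b ∈ S, a ≠ b → Nat.gcd a b = d ∧ χ s(a, b) = i}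
    (d * Nat.nth Nat.Prime (R - 2)) := by
  simp only [← arrows_top_iff] at hR
  have hR2 : 2 ≤ R := hR.1.two_le hc hk
  refine ⟨arrows_gcd_of_arrows_top hd hR.1, fun n hn => ?_⟩
  by_contra! hlt
  have := hR.2 (arrows_top_of_arrows_gcd hd hR2 hlt hn)
  omega
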